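/- arXiv:1508.07119 — 2 statements merged into one kernel-verified Lean document; each statement's English description precedes it below -/
import Mathlib

section
/- A finite simple graph G is inseparable if and only if for every vertex i, the complement of the induced subgraph of G on the neighborhood N(i) is connected. -/
open MvPolynomial

/-- The edge ideal of a graph. -/
noncomputable def edgeIdeal (K : Type*) [Field K] {V : Type*} (G : SimpleGraph V) :
    Ideal (MvPolynomial V K) :=
  Ideal.span {m | ∃ i j, G.Adj i j ∧ m = X i * X j}

/-- A vertex cover of a graph. -/
def IsVertexCover {V : Type*} (G : SimpleGraph V) (C : Set V) : Prop :=
  ∀ i j, G.Adj i j → i ∈ C ∨ j ∈ C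

/-- A minimal vertex cover. -/
def IsMinVertexCover {V : Type*} (G : SimpleGraph V) (C : Set V) : Prop :=
  IsVertexCover G C ∧ ∀ C' ⊆ C, IsVertexCover G C' → C' = C

/-- An independent set. -/
def IsIndepSet {V : Type*} (G : SimpleGraph V) (D : Set V) : Prop :=
  ∀ i ∈ D, ∀ j ∈ D, ¬ G.Adj i j

/-- The vertex cover ideal (= Alexander dual of the edge ideal). -/
noncomputable def coverIdeal (K : Type*) [Field K] {V : Type*} (G : SimpleGraph V) :
    Ideal (MvPolynomial V K) :=
  Ideal.span {m | ∃ C : Finset V, IsMinVertexCover G ↑C ∧ m = ∏ i ∈ C, X i}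

/-- The graded maximal ideal of a polynomial ring. -/
noncomputable def maxIdeal (σ K : Type*) [Field K] : Ideal (MvPolynomial σ K) :=
  Ideal.span (Set.range X)

/-- `S/I` is a Cohen-Macaulay ring: there is a regular sequence on `S/I` consisting of
elements of the graded maximal ideal whose length equals the Krull dimension of `S/I`. -/
def IsCMquot {σ K : Type*} [Field K] (I : Ideal (MvPolynomial σ K)) : Prop :=
  ∃ rs : List (MvPolynomial σ K), (∀ r ∈ rs, r ∈ maxIdeal σ K) ∧
    RingTheory.Sequence.IsRegular (MvPolynomial σ K ⧸ I) rs ∧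
    (rs.length : WithBot (WithTop ℕ)) = ringKrullDim (MvPolynomial σ K ⧸ I)

/-- A graph is Cohen-Macaulay over `K` if its edge ideal defines a CM quotient. -/
def IsCMGraph (K : Type*) [Field K] {V : Type*} (G : SimpleGraph V) : Prop :=
  IsCMquot (edgeIdeal K G)

/-- A graph is bi-Cohen-Macaulay over `K` if both the edge ideal and its Alexander dual
(the vertex cover ideal) define Cohen-Macaulay quotients. -/
def IsBiCMGraph (K : Type*) [Field K] {V : Type*} (G : SimpleGraph V) : Prop :=
  IsCMquot (edgeIdeal K G) ∧ IsCMquot (coverIdeal K G)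

/-- `I` has a `d`-linear resolution: it admits a free resolution in which the generators
are homogeneous of degree `d`, and all entries of the syzygy matrices are homogeneous of
degree `1` (in particular the resolution is minimal and all `i`-th syzygies live in
degree `i + d`). -/
def HasLinearResolution {σ K : Type*} [Field K] (I : Ideal (MvPolynomial σ K)) (d : ℕ) :
    Prop :=
  ∃ (b : ℕ → ℕ) (g : Fin (b 0) → MvPolynomial σ K)
      (M : ∀ i, Matrix (Fin (b i)) (Fin (b (i + 1))) (MvPolynomial σ K)),
    (∀ k, g k ∈ homogeneousSubmodule σ K d) ∧
    Ideal.span (Set.range g) = I ∧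
    (∀ i k l, M i k l ∈ homogeneousSubmodule σ K 1) ∧
    LinearMap.ker (Matrix.mulVecLin (Matrix.of fun (_ : Fin 1) k => g k)) =
      LinearMap.range (Matrix.mulVecLin (M 0)) ∧
    ∀ i, LinearMap.ker (Matrix.mulVecLin (M i)) =
      LinearMap.range (Matrix.mulVecLin (M (i + 1)))

/-- `b` is the sequence of (total) Betti numbers of `I`: there is a free resolution of `I`
with `i`-th free module of rank `b i` which is minimal, i.e. all entries of the syzygy
matrices lie in the graded maximal ideal. -/
def IsMinimalFreeResolution {σ K : Type*} [Field K] (I : Ideal (MvPolynomial σ K))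
    (b : ℕ → ℕ) : Prop :=
  ∃ (g : Fin (b 0) → MvPolynomial σ K)
      (M : ∀ i, Matrix (Fin (b i)) (Fin (b (i + 1))) (MvPolynomial σ K)),
    Ideal.span (Set.range g) = I ∧
    (∀ i k l, M i k l ∈ maxIdeal σ K) ∧
    LinearMap.ker (Matrix.mulVecLin (Matrix.of fun (_ : Fin 1) k => g k)) =
      LinearMap.range (Matrix.mulVecLin (M 0)) ∧
    ∀ i, LinearMap.ker (Matrix.mulVecLin (M i)) =
      LinearMap.range (Matrix.mulVecLin (M (i + 1)))

/-- The Alexander dual of a squarefree monomial ideal: it is generated by the monomials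
`∏_{i ∈ C} x_i` where `P_C = (x_i : i ∈ C)` runs through the minimal primes of `I`. -/
noncomputable def alexDual {σ K : Type*} [Field K] (I : Ideal (MvPolynomial σ K)) :
    Ideal (MvPolynomial σ K) :=
  Ideal.span {m | ∃ C : Finset σ,
    Ideal.span ((fun i => (X i : MvPolynomial σ K)) '' ↑C) ∈ I.minimalPrimes ∧
    m = ∏ i ∈ C, X i}

/-- A squarefree monomial ideal. -/
def IsSquarefreeMonomialIdeal {σ K : Type*} [Field K] (I : Ideal (MvPolynomial σ K)) :
    Prop :=
  ∃ A : Set (Finset σ), I = Ideal.span ((fun F => ∏ i ∈ F, (X i : MvPolynomial σ K)) '' A)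

/-- A monomial ideal. -/
def IsMonomialIdeal {σ K : Type*} [Field K] (I : Ideal (MvPolynomial σ K)) : Prop :=
  ∃ A : Set (σ →₀ ℕ), I = Ideal.span ((fun u => (monomial u (1 : K))) '' A)

/-- `f` divides some minimal generator of the monomial ideal `I`. -/
def DividesMinGen {σ K : Type*} [Field K] (I : Ideal (MvPolynomial σ K))
    (f : MvPolynomial σ K) : Prop :=
  ∃ u : σ →₀ ℕ, monomial u (1 : K) ∈ I ∧
    (∀ v : σ →₀ ℕ, v ≤ u → monomial v (1 : K) ∈ I → v = u) ∧
    f ∣ monomial u (1 : K)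

/-- The specialization map `S[y] → S`, `y ↦ x_i`, where `y` is the last variable. -/
noncomputable def sepMap (K : Type*) [Field K] (n : ℕ) (i : Fin n) :
    MvPolynomial (Fin (n + 1)) K →ₐ[K] MvPolynomial (Fin n) K :=
  aeval (fun j => if h : (j : ℕ) < n then X ⟨j, h⟩ else X i)

/-- `J ⊆ S[y]` is a separation of `I ⊆ S` for the variable `x_i`:  `J` is a monomial ideal
mapping onto `I` under `y ↦ x_i`, both `x_i` and `y` divide minimal generators of `J`, and
`y - x_i` is a nonzerodivisor on `S[y]/J`. -/
def IsSeparation {n : ℕ} {K : Type*} [Field K] (J : Ideal (MvPolynomial (Fin (n + 1)) K))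
    (I : Ideal (MvPolynomial (Fin n) K)) (i : Fin n) : Prop :=
  IsMonomialIdeal J ∧
  Ideal.map (sepMap K n i) J = I ∧
  DividesMinGen J (X (Fin.last n)) ∧
  DividesMinGen J (X (Fin.castSucc i)) ∧
  ∀ f, (X (Fin.last n) - X (Fin.castSucc i)) * f ∈ J → f ∈ J

/-- A squarefree monomial ideal is separable if it admits a separation. -/
def IsSeparableIdeal {n : ℕ} {K : Type*} [Field K] (I : Ideal (MvPolynomial (Fin n) K)) :
    Prop :=
  ∃ (i : Fin n) (J : Ideal (MvPolynomial (Fin (n + 1)) K)), IsSeparation J I i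

/-! A separation of `I_G` at `x_i` amounts to splitting the vertex `i` into `i` and a new vertex
`y`, the neighbours `N(i) = A ⊔ B` being shared out between `y` and `i`. Both parts are nonempty
because `y` and `x_i` divide minimal generators, and `y - x_i` being a nonzerodivisor forces every
vertex of `A` to be adjacent to every vertex of `B`: the complement of `G` on `N(i)` has no edge
between `A` and `B`. Conversely, if that complement is disconnected, splitting `i` along a union
`A` of its components gives a graph whose edge ideal is a separation; `y - x_i` is a
nonzerodivisor there because every neighbour of `y` is adjacent to every neighbour of `x_i`. -/

open Finsupp

namespace Finsupp

variable {σ τ : Type*}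

lemma single_add_single_le_iff {p q : σ} (hpq : p ≠ q) {w : σ →₀ ℕ} :
    single p 1 + single q 1 ≤ w ↔ w p ≠ 0 ∧ w q ≠ 0 := by
  classical
  simp only [← Nat.one_le_iff_ne_zero]
  refine ⟨fun h => ⟨le_trans ?_ (h p), le_trans ?_ (h q)⟩, fun ⟨hp, hq⟩ t => ?_⟩
  · simp
  · simp
  · rcases eq_or_ne t p with rfl | htp
    · simpa [hpq] using hp
    · rcases eq_or_ne t q with rfl | htq
      · simpa [htp] using hq
      · simp [htp.symm, htq.symm]

lemma eq_of_le_of_degree_le {u v : σ →₀ ℕ} (h : u ≤ v) (hd : v.degree ≤ u.degree) : u = v := by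
  obtain ⟨w, rfl⟩ := le_iff_exists_add.1 h
  have : w.degree = 0 := by simp only [map_add] at hd; omega
  simp [(degree_eq_zero_iff w).1 this]

lemma exists_eq_single_add_single_of_mapDomain_eq {f : σ → τ} {u : σ →₀ ℕ} {j k : τ}
    (h : u.mapDomain f = single j 1 + single k 1) :
    ∃ s t, f s = j ∧ f t = k ∧ u = single s 1 + single t 1 := by
  classical
  have hm : (toMultiset u).map f = j ::ₘ {k} := by
    rw [toMultiset_map, h, map_add, toMultiset_single, toMultiset_single, one_smul, one_smul,
      Multiset.singleton_add]
  obtain ⟨s, hs, rfl, hrest⟩ := (Multiset.map_eq_cons f _ _ _).2 hm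
  obtain ⟨t, ht, rfl⟩ := Multiset.map_eq_singleton.1 hrest
  refine ⟨s, t, rfl, rfl, ?_⟩
  have hu : toMultiset u = toMultiset (single s 1 + single t 1) := by
    rw [← Multiset.cons_erase hs, ht, map_add, toMultiset_single, toMultiset_single, one_smul,
      one_smul, Multiset.singleton_add]
  rw [← toMultiset_toFinsupp u, hu, toMultiset_toFinsupp]

lemma exists_apply_ne_zero_of_mapDomain_apply_ne_zero {M : Type*} [AddCommMonoid M] {f : σ → τ}
    {v : σ →₀ M} {b : τ} (h : v.mapDomain f b ≠ 0) : ∃ a, f a = b ∧ v a ≠ 0 := by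
  classical
  obtain ⟨a, ha, rfl⟩ := Finset.mem_image.1 (mapDomain_support (Finsupp.mem_support_iff.2 h))
  exact ⟨a, rfl, Finsupp.mem_support_iff.1 ha⟩

end Finsupp

lemma SimpleGraph.preconnected_iff_forall_adj_closed {V : Type*} {Γ : SimpleGraph V} :
    Γ.Preconnected ↔
      ∀ S : Set V, (∀ u v, Γ.Adj u v → u ∈ S → v ∈ S) → ∀ u ∈ S, ∀ v, v ∈ S := by
  refine ⟨fun h S hS u hu v => ?_, fun h u v => h {w | Γ.Reachable u w}
    (fun _ _ hvw huv => huv.trans hvw.reachable) u (SimpleGraph.Reachable.refl u) v⟩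
  obtain ⟨p⟩ := h u v
  induction p with
  | nil => exact hu
  | cons hadj _ ih => exact ih (hS _ _ hadj hu)

section MonomialIdeal

variable {σ K : Type*} [Field K] {J : Ideal (MvPolynomial σ K)}

lemma monomial_mem_span_monomial_iff {S : Set (σ →₀ ℕ)} {w : σ →₀ ℕ} :
    monomial w (1 : K) ∈ Ideal.span ((fun u => monomial u (1 : K)) '' S) ↔ ∃ s ∈ S, s ≤ w := by
  classical
  rw [mem_ideal_span_monomial_image, support_monomial, if_neg one_ne_zero]
  simp

lemma map_rename_span_monomial {τ : Type*} (f : σ → τ) (S : Set (σ →₀ ℕ)) :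
    Ideal.map (rename f) (Ideal.span ((fun u => monomial u (1 : K)) '' S)) =
      Ideal.span ((fun u => monomial u (1 : K)) '' (mapDomain f '' S)) := by
  rw [Ideal.map_span, Set.image_image, Set.image_image]
  simp only [rename_monomial]

namespace IsMonomialIdeal

lemma mem_iff (hJ : IsMonomialIdeal J) {f : MvPolynomial σ K} :
    f ∈ J ↔ ∀ u ∈ f.support, monomial u (1 : K) ∈ J := by
  obtain ⟨S, rfl⟩ := hJ
  rw [mem_ideal_span_monomial_image]
  simp only [monomial_mem_span_monomial_iff]

lemma monomial_mem_of_le (hJ : IsMonomialIdeal J) {u v : σ →₀ ℕ}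
    (hu : monomial u (1 : K) ∈ J) (huv : u ≤ v) : monomial v (1 : K) ∈ J := by
  obtain ⟨S, rfl⟩ := hJ
  obtain ⟨s, hs, hsu⟩ := monomial_mem_span_monomial_iff.1 hu
  exact monomial_mem_span_monomial_iff.2 ⟨s, hs, hsu.trans huv⟩

end IsMonomialIdeal

lemma X_sub_X_mul_monomial (p q : σ) (u : σ →₀ ℕ) :
    (X p - X q) * monomial u (1 : K) =
      monomial (u + single p 1) 1 - monomial (u + single q 1) 1 := by
  simp only [sub_mul, monomial_add_single, pow_one, mul_comm]

lemma not_monomial_add_single_mem_and {p q : σ}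
    (hnzd : ∀ f, (X p - X q) * f ∈ J → f ∈ J) {u : σ →₀ ℕ} (hu : monomial u (1 : K) ∉ J) :
    ¬ (monomial (u + single p 1) (1 : K) ∈ J ∧ monomial (u + single q 1) (1 : K) ∈ J) :=
  fun ⟨hp, hq⟩ => hu (hnzd _ (by rw [X_sub_X_mul_monomial]; exact J.sub_mem hp hq))

lemma DividesMinGen.exists_monomial_add_single_mem {p : σ} (h : DividesMinGen J (X p)) :
    ∃ v, monomial (v + single p 1) (1 : K) ∈ J ∧ monomial v (1 : K) ∉ J := by
  obtain ⟨u, hu, hmin, hdvd⟩ := h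
  have hup : u p ≠ 0 := by simpa using hdvd
  have hsplit : u - single p 1 + single p 1 = u :=
    tsub_add_cancel_of_le (single_le_iff.2 (Nat.one_le_iff_ne_zero.2 hup))
  refine ⟨u - single p 1, hsplit ▸ hu, fun hv => ?_⟩
  have := congr($(hmin _ tsub_le_self hv) p)
  simp only [tsub_apply, single_eq_same] at this
  omega

lemma coeff_X_sub_X_mul (p q : σ) (m : σ →₀ ℕ) (f : MvPolynomial σ K) :
    coeff m ((X p - X q) * f) =
      (if m p ≠ 0 then coeff (m - single p 1) f else 0) -
        (if m q ≠ 0 then coeff (m - single q 1) f else 0) := by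
  classical
  simp only [sub_mul, coeff_sub, coeff_X_mul', Finsupp.mem_support_iff]

lemma IsMonomialIdeal.mem_of_X_sub_X_mul_mem (hJ : IsMonomialIdeal J) {p q : σ} (hpq : p ≠ q)
    (hsq : ∀ u, u p ≠ 0 → monomial (u + single p 1) (1 : K) ∈ J → monomial u 1 ∈ J)
    (hcorner : ∀ u, monomial (u + single p 1) (1 : K) ∈ J →
      monomial (u + single q 1) (1 : K) ∈ J → monomial u 1 ∈ J)
    {f : MvPolynomial σ K} (hf : (X p - X q) * f ∈ J) : f ∈ J := by
  classical
  have hcoeff : ∀ m, coeff m ((X p - X q) * f) ≠ 0 → monomial m (1 : K) ∈ J :=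
    fun m hm => hJ.mem_iff.1 hf m (MvPolynomial.mem_support_iff.2 hm)
  rw [hJ.mem_iff]
  -- induction on the exponent of `x_q`: if `u ∉ J` is a term of `f` and `u + e_p ∉ J`, then
  -- `u + e_p - e_q` is a term of `f` with the same coefficient
  suffices ∀ N u, u q = N → coeff u f ≠ 0 → monomial u (1 : K) ∈ J from
    fun u hu => this _ u rfl (MvPolynomial.mem_support_iff.1 hu)
  intro N
  induction N using Nat.strong_induction_on with
  | _ N ih =>
  intro u huN hu
  by_contra hnot
  by_cases hp : monomial (u + single p 1) (1 : K) ∈ J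
  · have hup : u p = 0 := by
      by_contra h
      exact hnot (hsq u h hp)
    refine hnot (hcorner u hp (hcoeff _ ?_))
    simpa [coeff_X_sub_X_mul, hup, hpq] using hu
  · have h0 : coeff (u + single p 1) ((X p - X q) * f) = 0 := by
      by_contra h
      exact hp (hcoeff _ h)
    by_cases huq : u q = 0
    · exact hu (by simpa [coeff_X_sub_X_mul, hpq.symm, huq] using h0)
    · have hshift : coeff (u + single p 1 - single q 1) f = coeff u f := by
        simp only [coeff_X_sub_X_mul, Finsupp.coe_add, Pi.add_apply, single_eq_same, ne_eq,
          Nat.add_eq_zero_iff, one_ne_zero, and_false, not_false_eq_true, ↓reduceIte,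
          add_tsub_cancel_right, hpq.symm, single_eq_of_ne, add_zero, huq] at h0
        exact (sub_eq_zero.1 h0).symm
      have hlt : u q - 1 < N := by omega
      have hmem := ih _ hlt (u + single p 1 - single q 1)
        (by simp [single_eq_of_ne hpq.symm]) (hshift ▸ hu)
      exact hp (hJ.monomial_mem_of_le hmem tsub_le_self)

end MonomialIdeal

section EdgeIdeal

variable {σ K : Type*} [Field K] {G : SimpleGraph σ}

lemma X_mul_X_eq_monomial (j k : σ) :
    (X j * X k : MvPolynomial σ K) = monomial (single j 1 + single k 1) 1 := by
  rw [monomial_single_add, pow_one]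
  rfl

lemma edgeIdeal_eq_span_monomial :
    edgeIdeal K G = Ideal.span ((fun u => monomial u (1 : K)) ''
      {u | ∃ j k, G.Adj j k ∧ u = single j 1 + single k 1}) := by
  unfold edgeIdeal
  congr 1
  ext m
  constructor
  · rintro ⟨j, k, h, rfl⟩
    exact ⟨_, ⟨j, k, h, rfl⟩, (X_mul_X_eq_monomial j k).symm⟩
  · rintro ⟨_, ⟨j, k, h, rfl⟩, rfl⟩
    exact ⟨j, k, h, (X_mul_X_eq_monomial j k).symm⟩

lemma isMonomialIdeal_edgeIdeal : IsMonomialIdeal (edgeIdeal K G) :=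
  ⟨_, edgeIdeal_eq_span_monomial⟩

lemma monomial_mem_edgeIdeal_iff {w : σ →₀ ℕ} :
    monomial w (1 : K) ∈ edgeIdeal K G ↔ ∃ j k, G.Adj j k ∧ w j ≠ 0 ∧ w k ≠ 0 := by
  rw [edgeIdeal_eq_span_monomial, monomial_mem_span_monomial_iff]
  constructor
  · rintro ⟨_, ⟨j, k, h, rfl⟩, hle⟩
    exact ⟨j, k, h, (single_add_single_le_iff h.ne).1 hle⟩
  · rintro ⟨j, k, h, hj, hk⟩
    exact ⟨_, ⟨j, k, h, rfl⟩, (single_add_single_le_iff h.ne).2 ⟨hj, hk⟩⟩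

lemma monomial_single_add_single_mem_edgeIdeal_iff {a b : σ} :
    monomial (single a 1 + single b 1) (1 : K) ∈ edgeIdeal K G ↔ G.Adj a b := by
  classical
  refine ⟨fun h => ?_, fun h => monomial_mem_edgeIdeal_iff.2 ⟨a, b, h, by simp, by simp⟩⟩
  obtain ⟨j, k, hjk, hj, hk⟩ := monomial_mem_edgeIdeal_iff.1 h
  have hsupp : ∀ x, (single a 1 + single b 1 : σ →₀ ℕ) x ≠ 0 → x = a ∨ x = b := by
    intro x hx
    by_contra hne
    push Not at hne
    simp [hne.1.symm, hne.2.symm] at hx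
  rcases hsupp j hj with rfl | rfl <;> rcases hsupp k hk with rfl | rfl
  all_goals first | exact (hjk.ne rfl).elim | exact hjk | exact hjk.symm

lemma two_le_degree_of_monomial_mem_edgeIdeal {w : σ →₀ ℕ}
    (h : monomial w (1 : K) ∈ edgeIdeal K G) : 2 ≤ w.degree := by
  obtain ⟨j, k, hjk, hj, hk⟩ := monomial_mem_edgeIdeal_iff.1 h
  have := degree_mono ((single_add_single_le_iff hjk.ne).2 ⟨hj, hk⟩)
  simpa using this

lemma monomial_mem_edgeIdeal_or_of_add_single {u : σ →₀ ℕ} {p : σ}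
    (h : monomial (u + single p 1) (1 : K) ∈ edgeIdeal K G) :
    monomial u (1 : K) ∈ edgeIdeal K G ∨ ∃ a, G.Adj p a ∧ u a ≠ 0 := by
  classical
  obtain ⟨j, k, hjk, hj, hk⟩ := monomial_mem_edgeIdeal_iff.1 h
  by_cases hjp : j = p
  · subst hjp
    exact Or.inr ⟨k, hjk, by simpa [single_apply, hjk.ne] using hk⟩
  by_cases hkp : k = p
  · subst hkp
    exact Or.inr ⟨j, hjk.symm, by simpa [single_apply, hjk.ne'] using hj⟩
  exact Or.inl (monomial_mem_edgeIdeal_iff.2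
    ⟨j, k, hjk, by simpa [single_apply, Ne.symm hjp] using hj,
      by simpa [single_apply, Ne.symm hkp] using hk⟩)

lemma dividesMinGen_X_edgeIdeal {p q : σ} (h : G.Adj p q) :
    DividesMinGen (edgeIdeal K G) (X p) := by
  refine ⟨single p 1 + single q 1, monomial_single_add_single_mem_edgeIdeal_iff.2 h,
    fun v hv hvJ => eq_of_le_of_degree_le hv ?_, by simp⟩
  simpa using two_le_degree_of_monomial_mem_edgeIdeal hvJ

lemma mem_edgeIdeal_of_X_sub_X_mul_mem {p q : σ} (hpq : p ≠ q)
    (hcross : ∀ a b, G.Adj p a → G.Adj q b → G.Adj a b) {f : MvPolynomial σ K}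
    (hf : (X p - X q) * f ∈ edgeIdeal K G) : f ∈ edgeIdeal K G := by
  refine isMonomialIdeal_edgeIdeal.mem_of_X_sub_X_mul_mem hpq (fun u hup hu => ?_)
    (fun u hp hq => ?_) hf
  · obtain hu | ⟨a, hpa, ha⟩ := monomial_mem_edgeIdeal_or_of_add_single hu
    · exact hu
    · exact monomial_mem_edgeIdeal_iff.2 ⟨p, a, hpa, hup, ha⟩
  · obtain hu | ⟨a, hpa, ha⟩ := monomial_mem_edgeIdeal_or_of_add_single hp
    · exact hu
    obtain hu | ⟨b, hqb, hb⟩ := monomial_mem_edgeIdeal_or_of_add_single hq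
    · exact hu
    exact monomial_mem_edgeIdeal_iff.2 ⟨a, b, hcross a b hpa hqb, ha, hb⟩

lemma map_rename_edgeIdeal {τ : Type*} {H : SimpleGraph τ} (f : τ → σ)
    (hf : ∀ a b, G.Adj a b ↔ ∃ s t, H.Adj s t ∧ f s = a ∧ f t = b) :
    Ideal.map (rename f) (edgeIdeal K H) = edgeIdeal K G := by
  unfold edgeIdeal
  rw [Ideal.map_span]
  congr 1
  ext m
  constructor
  · rintro ⟨_, ⟨s, t, hst, rfl⟩, rfl⟩
    exact ⟨f s, f t, (hf _ _).2 ⟨s, t, hst, rfl, rfl⟩, by simp⟩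
  · rintro ⟨a, b, hab, rfl⟩
    obtain ⟨s, t, hst, rfl, rfl⟩ := (hf a b).1 hab
    exact ⟨_, ⟨s, t, hst, rfl⟩, by simp⟩

end EdgeIdeal

section Specialization

variable {n : ℕ}

def mergeLast (i : Fin n) : Fin (n + 1) → Fin n :=
  Fin.lastCases i id

@[simp] lemma mergeLast_last (i : Fin n) : mergeLast i (Fin.last n) = i :=
  Fin.lastCases_last

@[simp] lemma mergeLast_castSucc (i j : Fin n) : mergeLast i j.castSucc = j :=
  Fin.lastCases_castSucc j

lemma mergeLast_eq_iff {i j : Fin n} {s : Fin (n + 1)} :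
    mergeLast i s = j ↔ s = j.castSucc ∨ s = Fin.last n ∧ i = j := by
  induction s using Fin.lastCases with
  | last => simp [(Fin.castSucc_lt_last j).ne']
  | cast t => simp [Fin.castSucc_inj, (Fin.castSucc_lt_last t).ne]

lemma sepMap_eq_rename (K : Type*) [Field K] (i : Fin n) :
    sepMap K n i = rename (mergeLast i) := by
  refine MvPolynomial.algHom_ext fun s => ?_
  induction s using Fin.lastCases with
  | last => simp [sepMap]
  | cast t => simp [sepMap]

end Specialization

/-- The graph `G^{(i)}`. -/
abbrev neighborComplement {V : Type*} (G : SimpleGraph V) (i : V) :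
    SimpleGraph (G.neighborSet i) :=
  SimpleGraph.fromRel fun a b => ¬ G.Adj a b

section Split

variable {n : ℕ} {G : SimpleGraph (Fin n)} {i : Fin n} {A : Set (Fin n)}

open scoped Classical in
noncomputable def splitLift (i : Fin n) (A : Set (Fin n)) (j k : Fin n) : Fin (n + 1) :=
  if j = i ∧ k ∈ A then Fin.last n else j.castSucc

@[simp] lemma mergeLast_splitLift (j k : Fin n) : mergeLast i (splitLift i A j k) = j := by
  unfold splitLift
  split_ifs with h
  · simp [h.1]
  · simp

lemma splitLift_of_ne {j : Fin n} (k : Fin n) (hj : j ≠ i) : splitLift i A j k = j.castSucc := by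
  simp [splitLift, hj]

lemma splitLift_eq_last_iff {j k : Fin n} : splitLift i A j k = Fin.last n ↔ j = i ∧ k ∈ A := by
  unfold splitLift
  split_ifs with h
  · simpa using h
  · simpa [(Fin.castSucc_lt_last j).ne] using h

/-- `G` with the vertex `i` split in two, the edges from `i` to `A` going to the new vertex. -/
def splitGraph (G : SimpleGraph (Fin n)) (i : Fin n) (A : Set (Fin n)) :
    SimpleGraph (Fin (n + 1)) where
  Adj s t := ∃ j k, G.Adj j k ∧ splitLift i A j k = s ∧ splitLift i A k j = t
  symm := ⟨fun _ _ ⟨j, k, h, hs, ht⟩ => ⟨k, j, h.symm, ht, hs⟩⟩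
  loopless := ⟨fun _ ⟨j, k, h, hs, ht⟩ =>
    h.ne (by simpa using congrArg (mergeLast i) (hs.trans ht.symm))⟩

lemma splitGraph_adj {s t : Fin (n + 1)} : (splitGraph G i A).Adj s t ↔
    ∃ j k, G.Adj j k ∧ splitLift i A j k = s ∧ splitLift i A k j = t :=
  Iff.rfl

lemma adj_iff_exists_splitGraph_adj (a b : Fin n) :
    G.Adj a b ↔ ∃ s t, (splitGraph G i A).Adj s t ∧ mergeLast i s = a ∧ mergeLast i t = b := by
  constructor
  · intro h
    exact ⟨_, _, splitGraph_adj.2 ⟨a, b, h, rfl, rfl⟩, by simp, by simp⟩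
  · rintro ⟨_, _, hst, rfl, rfl⟩
    obtain ⟨j, k, h, rfl, rfl⟩ := splitGraph_adj.1 hst
    simpa using h

lemma splitGraph_adj_of_adj_last (hA : ∀ a ∈ A, ∀ b, G.Adj i b → b ∉ A → G.Adj a b)
    {s t : Fin (n + 1)} (hs : (splitGraph G i A).Adj (Fin.last n) s)
    (ht : (splitGraph G i A).Adj i.castSucc t) : (splitGraph G i A).Adj s t := by
  obtain ⟨j, a, hja, hlast, rfl⟩ := splitGraph_adj.1 hs
  obtain ⟨rfl, haA⟩ := splitLift_eq_last_iff.1 hlast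
  obtain ⟨j', b, hjb, hi, rfl⟩ := splitGraph_adj.1 ht
  obtain rfl : j' = j := by simpa using congrArg (mergeLast j) hi
  have hbA : b ∉ A := fun hbA => by
    simp [splitLift, hbA, (Fin.castSucc_lt_last j').ne'] at hi
  refine splitGraph_adj.2 ⟨a, b, hA a haA b hjb hbA, ?_, ?_⟩
  · rw [splitLift_of_ne _ hja.ne', splitLift_of_ne _ hja.ne']
  · rw [splitLift_of_ne _ hjb.ne', splitLift_of_ne _ hjb.ne']

theorem isSeparation_edgeIdeal_splitGraph (K : Type*) [Field K]
    (hA : ∀ a ∈ A, ∀ b, G.Adj i b → b ∉ A → G.Adj a b) {x z : Fin n}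
    (hx : G.Adj i x) (hxA : x ∈ A) (hz : G.Adj i z) (hzA : z ∉ A) :
    IsSeparation (edgeIdeal K (splitGraph G i A)) (edgeIdeal K G) i := by
  refine ⟨isMonomialIdeal_edgeIdeal, ?_, dividesMinGen_X_edgeIdeal (q := x.castSucc) ?_,
    dividesMinGen_X_edgeIdeal (q := z.castSucc) ?_, fun f hf =>
      mem_edgeIdeal_of_X_sub_X_mul_mem (Fin.castSucc_lt_last i).ne'
        (fun _ _ => splitGraph_adj_of_adj_last hA) hf⟩
  · rw [sepMap_eq_rename]
    exact map_rename_edgeIdeal _ adj_iff_exists_splitGraph_adj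
  · exact splitGraph_adj.2 ⟨i, x, hx, splitLift_eq_last_iff.2 ⟨rfl, hxA⟩, splitLift_of_ne _ hx.ne'⟩
  · exact splitGraph_adj.2 ⟨i, z, hz, by simp [splitLift, hzA], splitLift_of_ne _ hz.ne'⟩

theorem isSeparableIdeal_of_not_connected (K : Type*) [Field K] {w : Fin n} (hw : G.Adj i w)
    (h : ¬ (neighborComplement G i).Connected) : IsSeparableIdeal (edgeIdeal K G) := by
  have hpre : ¬ (neighborComplement G i).Preconnected :=
    fun hp => h ((SimpleGraph.connected_iff _).2 ⟨hp, ⟨⟨w, hw⟩⟩⟩)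
  simp only [SimpleGraph.preconnected_iff_forall_adj_closed, not_forall] at hpre
  obtain ⟨S, hS, ⟨x, hx⟩, hxS, ⟨z, hz⟩, hzS⟩ := hpre
  set A : Set (Fin n) := {a | ∃ h : G.Adj i a, ⟨a, h⟩ ∈ S}
  have hA : ∀ a ∈ A, ∀ b, G.Adj i b → b ∉ A → G.Adj a b := by
    rintro a ⟨ha, haS⟩ b hb hbA
    by_contra hab
    refine hbA ⟨hb, hS _ _ (SimpleGraph.fromRel_adj _ _ _ |>.2 ⟨fun he => ?_, Or.inl hab⟩) haS⟩
    cases he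
    exact hbA ⟨ha, haS⟩
  exact ⟨i, _, isSeparation_edgeIdeal_splitGraph K hA hx ⟨hx, hxS⟩ hz fun ⟨_, h⟩ => hzS h⟩

end Split

section Separation

variable {n : ℕ} {K : Type*} [Field K] {G : SimpleGraph (Fin n)} {i : Fin n}
  {J : Ideal (MvPolynomial (Fin (n + 1)) K)}

lemma castSucc_ne_zero_of_mapDomain_mergeLast_ne_zero {v : Fin (n + 1) →₀ ℕ} {j : Fin n}
    (h : v.mapDomain (mergeLast i) j ≠ 0) (hj : j ≠ i) : v j.castSucc ≠ 0 := by
  obtain ⟨s, hs, hsv⟩ := exists_apply_ne_zero_of_mapDomain_apply_ne_zero h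
  obtain rfl : s = j.castSucc := (mergeLast_eq_iff.1 hs).resolve_right fun h => hj h.2.symm
  exact hsv

lemma monomial_mapDomain_mem_of_map_eq (hmap : Ideal.map (sepMap K n i) J = edgeIdeal K G)
    {u : Fin (n + 1) →₀ ℕ} (hu : monomial u (1 : K) ∈ J) :
    monomial (u.mapDomain (mergeLast i)) (1 : K) ∈ edgeIdeal K G := by
  rw [← hmap, ← rename_monomial, ← sepMap_eq_rename]
  exact Ideal.mem_map_of_mem _ hu

lemma exists_lift_of_adj (hmono : IsMonomialIdeal J)
    (hmap : Ideal.map (sepMap K n i) J = edgeIdeal K G) {j k : Fin n} (hjk : G.Adj j k) :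
    ∃ s t, mergeLast i s = j ∧ mergeLast i t = k ∧
      monomial (single s 1 + single t 1) (1 : K) ∈ J := by
  have hmem := monomial_single_add_single_mem_edgeIdeal_iff (K := K).2 hjk
  obtain ⟨S, rfl⟩ := hmono
  rw [← hmap, sepMap_eq_rename, map_rename_span_monomial, monomial_mem_span_monomial_iff] at hmem
  obtain ⟨_, ⟨a, haS, rfl⟩, hle⟩ := hmem
  have haJ : monomial a (1 : K) ∈ Ideal.span ((fun u => monomial u (1 : K)) '' S) :=
    Ideal.subset_span ⟨a, haS, rfl⟩
  have hdeg := two_le_degree_of_monomial_mem_edgeIdeal (monomial_mapDomain_mem_of_map_eq hmap haJ)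
  -- `a` maps onto `x_j x_k` because a monomial of `J` maps to one of degree at least two
  have heq := eq_of_le_of_degree_le hle (by simpa using hdeg)
  obtain ⟨s, t, hs, ht, rfl⟩ := exists_eq_single_add_single_of_mapDomain_eq heq
  exact ⟨s, t, hs, ht, haJ⟩

lemma monomial_castSucc_mem_of_adj (hmono : IsMonomialIdeal J)
    (hmap : Ideal.map (sepMap K n i) J = edgeIdeal K G) {j k : Fin n} (hjk : G.Adj j k)
    (hj : j ≠ i) (hk : k ≠ i) :
    monomial (single j.castSucc 1 + single k.castSucc 1) (1 : K) ∈ J := by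
  obtain ⟨s, t, hs, ht, hst⟩ := exists_lift_of_adj hmono hmap hjk
  obtain rfl : s = j.castSucc := (mergeLast_eq_iff.1 hs).resolve_right fun h => hj h.2.symm
  obtain rfl : t = k.castSucc := (mergeLast_eq_iff.1 ht).resolve_right fun h => hk h.2.symm
  exact hst

lemma adj_of_monomial_mem (hmono : IsMonomialIdeal J)
    (hmap : Ideal.map (sepMap K n i) J = edgeIdeal K G)
    (hnzd : ∀ f, (X (Fin.last n) - X i.castSucc) * f ∈ J → f ∈ J) {a b : Fin n}
    (ha : monomial (single (Fin.last n) 1 + single a.castSucc 1) (1 : K) ∈ J)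
    (hb : monomial (single i.castSucc 1 + single b.castSucc 1) (1 : K) ∈ J) : G.Adj a b := by
  set u : Fin (n + 1) →₀ ℕ := single a.castSucc 1 + single b.castSucc 1
  have hu : monomial u (1 : K) ∈ J := by
    by_contra hu
    refine not_monomial_add_single_mem_and hnzd hu
      ⟨hmono.monomial_mem_of_le ha ?_, hmono.monomial_mem_of_le hb ?_⟩
    · rw [add_comm u]
      exact add_le_add le_rfl le_self_add
    · rw [add_comm u]
      exact add_le_add le_rfl le_add_self
  simpa [u, mapDomain_add, monomial_single_add_single_mem_edgeIdeal_iff] using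
    monomial_mapDomain_mem_of_map_eq hmap hu

lemma exists_adj_ne_zero_of_monomial_notMem (hmono : IsMonomialIdeal J)
    (hmap : Ideal.map (sepMap K n i) J = edgeIdeal K G) {v : Fin (n + 1) →₀ ℕ}
    (hv : monomial v (1 : K) ∉ J)
    (h : monomial (v.mapDomain (mergeLast i) + single i 1) (1 : K) ∈ edgeIdeal K G) :
    ∃ k, G.Adj i k ∧ v k.castSucc ≠ 0 := by
  obtain h | ⟨k, hik, hk⟩ := monomial_mem_edgeIdeal_or_of_add_single h
  · obtain ⟨j, k, hjk, hj, hk⟩ := monomial_mem_edgeIdeal_iff.1 h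
    by_cases hji : j = i
    · subst hji
      exact ⟨k, hjk, castSucc_ne_zero_of_mapDomain_mergeLast_ne_zero hk hjk.ne'⟩
    by_cases hki : k = i
    · subst hki
      exact ⟨j, hjk.symm, castSucc_ne_zero_of_mapDomain_mergeLast_ne_zero hj hjk.ne⟩
    refine (hv (hmono.monomial_mem_of_le (monomial_castSucc_mem_of_adj hmono hmap hjk hji hki)
      ((single_add_single_le_iff ?_).2 ⟨?_, ?_⟩))).elim
    · simpa [Fin.castSucc_inj] using hjk.ne
    · exact castSucc_ne_zero_of_mapDomain_mergeLast_ne_zero hj hji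
    · exact castSucc_ne_zero_of_mapDomain_mergeLast_ne_zero hk hki
  · exact ⟨k, hik, castSucc_ne_zero_of_mapDomain_mergeLast_ne_zero hk hik.ne'⟩

lemma exists_adj_monomial_mem_of_dividesMinGen (hmono : IsMonomialIdeal J)
    (hmap : Ideal.map (sepMap K n i) J = edgeIdeal K G)
    (hnzd : ∀ f, (X (Fin.last n) - X i.castSucc) * f ∈ J → f ∈ J) {p q : Fin (n + 1)}
    (hpq : p = Fin.last n ∧ q = i.castSucc ∨ p = i.castSucc ∧ q = Fin.last n)
    (hp : DividesMinGen J (X p)) :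
    ∃ a, G.Adj i a ∧ monomial (single p 1 + single a.castSucc 1) (1 : K) ∈ J := by
  obtain ⟨v, hvp, hv⟩ := hp.exists_monomial_add_single_mem
  have hvq : monomial (v + single q 1) (1 : K) ∉ J := by
    rcases hpq with ⟨rfl, rfl⟩ | ⟨rfl, rfl⟩
    · exact fun hvq => not_monomial_add_single_mem_and hnzd hv ⟨hvp, hvq⟩
    · exact fun hvq => not_monomial_add_single_mem_and hnzd hv ⟨hvq, hvp⟩
  have hpi : mergeLast i p = i := by rcases hpq with ⟨rfl, -⟩ | ⟨rfl, -⟩ <;> simp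
  obtain ⟨k, hik, hk⟩ := exists_adj_ne_zero_of_monomial_notMem hmono hmap hv
    (by simpa [mapDomain_add, hpi] using monomial_mapDomain_mem_of_map_eq hmap hvp)
  obtain ⟨s, t, hs, ht, hst⟩ := exists_lift_of_adj hmono hmap hik
  obtain rfl : t = k.castSucc := (mergeLast_eq_iff.1 ht).resolve_right fun h => hik.ne h.2
  have hspq : s = p ∨ s = q := by
    rw [mergeLast_eq_iff] at hs
    rcases hpq with ⟨rfl, rfl⟩ | ⟨rfl, rfl⟩ <;> tauto
  rcases hspq with rfl | rfl
  · exact ⟨k, hik, hst⟩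
  · refine (hvq (hmono.monomial_mem_of_le hst ?_)).elim
    rw [add_comm v]
    exact add_le_add le_rfl (single_le_iff.2 (Nat.one_le_iff_ne_zero.2 hk))

theorem not_connected_of_isSeparation (hJ : IsSeparation J (edgeIdeal K G) i) :
    ¬ (neighborComplement G i).Connected := by
  obtain ⟨hmono, hmap, hy, hxi, hnzd⟩ := hJ
  obtain ⟨a, hia, ha⟩ :=
    exists_adj_monomial_mem_of_dividesMinGen hmono hmap hnzd (Or.inl ⟨rfl, rfl⟩) hy
  obtain ⟨b, hib, hb⟩ :=
    exists_adj_monomial_mem_of_dividesMinGen hmono hmap hnzd (Or.inr ⟨rfl, rfl⟩) hxi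
  set S : Set (G.neighborSet i) :=
    {x | monomial (single (Fin.last n) 1 + single x.1.castSucc 1) (1 : K) ∈ J}
  -- the neighbours joined to the new vertex are complete to the others, so they form a
  -- union of components of the complement
  have hS : ∀ x z, (neighborComplement G i).Adj x z → x ∈ S → z ∈ S := by
    intro x z hxz hx
    obtain ⟨s, t, hs, ht, hst⟩ := exists_lift_of_adj hmono hmap z.2
    obtain rfl : t = z.1.castSucc :=
      (mergeLast_eq_iff.1 ht).resolve_right fun h => (G.ne_of_adj z.2) h.2
    rcases mergeLast_eq_iff.1 hs with rfl | ⟨rfl, -⟩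
    · have hxz' := adj_of_monomial_mem hmono hmap hnzd hx hst
      rw [SimpleGraph.fromRel_adj] at hxz
      exact (hxz.2.elim (· hxz') (· hxz'.symm)).elim
    · exact hst
  intro hcon
  have hbS : ⟨b, hib⟩ ∈ S :=
    SimpleGraph.preconnected_iff_forall_adj_closed.1 hcon.preconnected S hS ⟨a, hia⟩ ha _
  exact G.loopless.irrefl b (adj_of_monomial_mem hmono hmap hnzd hbS hb)

end Separation

/-- a graph `G` is inseparable iff for every vertex `i` the complement of
the induced subgraph of `G` on the neighborhood `N(i)` is connected. -/
theorem inseparable_iff_complement_neighborhoods_connected {n : ℕ} (K : Type*) [Field K]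
    (G : SimpleGraph (Fin n)) (hiso : ∀ v, ∃ w, G.Adj v w) :
    ¬ IsSeparableIdeal (edgeIdeal K G) ↔
      ∀ i : Fin n,
        (SimpleGraph.fromRel (fun a b : G.neighborSet i => ¬ G.Adj ↑a ↑b)).Connected := by
  refine ⟨fun hins i => ?_, fun hcon ⟨i, J, hJ⟩ => not_connected_of_isSeparation hJ (hcon i)⟩
  by_contra hnc
  obtain ⟨w, hw⟩ := hiso i
  exact hins (isSeparableIdeal_of_not_connected K hw hnc)
end

section
/- For every tree T on m vertices, the generic bi-CM graph G_T is an inseparable graph; equivalently, for every vertex (i,j) of G_T, the complement of the induced subgraph on the neighborhood of (i,j) in G_T is connected. -/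
open MvPolynomial

/-- A graph is chordal if every cycle of length at least 4 has a chord: a pair of
vertices of the cycle which are adjacent in the graph but whose edge is not an edge
of the cycle. -/
def IsChordal {V : Type*} (G : SimpleGraph V) : Prop :=
  ∀ (v : V) (c : G.Walk v v), c.IsCycle → 4 ≤ c.length →
    ∃ x y, x ∈ c.support ∧ y ∈ c.support ∧ G.Adj x y ∧ s(x, y) ∉ c.edges

/-- The generic bi-CM graph `G_T` attached to a tree `T`: its vertices are the ordered
pairs `(i,j)` with `{i,j}` an edge of `T`, and `{(i,k),(j,l)}` is an edge of `G_T` iff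
for the (unique) path `i = i_0, i_1, …, i_r = j` in `T` one has `k = i_1` and
`l = i_{r-1}`. -/
def genericBiCM {m : ℕ} (T : SimpleGraph (Fin m)) :
    SimpleGraph {p : Fin m × Fin m // T.Adj p.1 p.2} :=
  SimpleGraph.fromRel (fun a b => ∃ p : T.Walk a.1.1 b.1.1,
    p.IsPath ∧ p.getVert 1 = a.1.2 ∧ p.getVert (p.length - 1) = b.1.2)

/-!
The swapped vertex `(j,i)` of `v = (i,j)` is a neighbour of `v` in `G_T` that is adjacent to no
other neighbour `x` of `v`: the tree path from `i` to `x.1` starts with the edge `i → j`, so the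
path from `j` to `x.1` avoids `i` and cannot start with `j → i`. Hence `(j,i)` is a universal
vertex of the complement of the neighbourhood of `v`, which is therefore connected.
-/

namespace SimpleGraph

variable {V : Type*} {G : SimpleGraph V}

/-- In a forest, the path from `j` to `a` is the tail of a path from `i` to `a` through `j`. -/
lemma IsAcyclic.getVert_one_ne_of_getVert_one (hG : G.IsAcyclic) {i j a : V} (hij : i ≠ j)
    {p : G.Walk i a} (hp : p.IsPath) (hp1 : p.getVert 1 = j)
    {s : G.Walk j a} (hs : s.IsPath) : s.getVert 1 ≠ i := by
  cases p with
  | nil => exact absurd hp1 hij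
  | cons h p' =>
    rw [Walk.getVert_cons_succ, Walk.getVert_zero] at hp1
    subst hp1
    rw [Walk.cons_isPath_iff] at hp
    have hsp : s = p' :=
      congrArg Subtype.val ((hG.subsingleton_path _ _).elim ⟨s, hs⟩ ⟨p', hp.1⟩)
    intro hs1
    exact hp.2 (hsp ▸ hs1 ▸ s.getVert_mem_support 1)

end SimpleGraph

open SimpleGraph

section

variable {m : ℕ} {T : SimpleGraph (Fin m)}

lemma genericBiCM_adj_swap {i j : Fin m} (hij : T.Adj i j) :
    (genericBiCM T).Adj ⟨(i, j), hij⟩ ⟨(j, i), hij.symm⟩ := by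
  refine (fromRel_adj _ _ _).2 ⟨fun h => hij.ne (congrArg (·.1.1) h), Or.inl ?_⟩
  exact ⟨.cons hij .nil, by simp [hij.ne], rfl, rfl⟩

lemma exists_isPath_getVert_one_of_genericBiCM_adj {x y : {p : Fin m × Fin m // T.Adj p.1 p.2}}
    (h : (genericBiCM T).Adj x y) :
    ∃ p : T.Walk x.1.1 y.1.1, p.IsPath ∧ p.getVert 1 = x.1.2 := by
  obtain ⟨-, ⟨p, hp, h1, -⟩ | ⟨q, hq, -, h2⟩⟩ := (fromRel_adj _ _ _).1 h
  · exact ⟨p, hp, h1⟩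
  · exact ⟨q.reverse, hq.reverse, by rwa [Walk.getVert_reverse]⟩

lemma not_genericBiCM_adj_swap_of_adj (hT : T.IsAcyclic) {i j : Fin m} (hij : T.Adj i j)
    {x : {p : Fin m × Fin m // T.Adj p.1 p.2}} (hx : (genericBiCM T).Adj ⟨(i, j), hij⟩ x) :
    ¬ (genericBiCM T).Adj x ⟨(j, i), hij.symm⟩ := by
  intro hxw
  obtain ⟨p, hp, hp1⟩ := exists_isPath_getVert_one_of_genericBiCM_adj hx
  obtain ⟨s, hs, hs1⟩ := exists_isPath_getVert_one_of_genericBiCM_adj hxw.symm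
  exact hT.getVert_one_ne_of_getVert_one hij.ne hp hp1 hs hs1

end

/-- for every tree `T`, the generic bi-CM graph `G_T` is inseparable;
equivalently, for every vertex of `G_T` the complement of the induced subgraph on its
neighborhood is connected. -/
theorem genericBiCM_inseparable {m : ℕ} (T : SimpleGraph (Fin m)) (hT : T.IsTree) :
    ∀ v : {p : Fin m × Fin m // T.Adj p.1 p.2},
      (SimpleGraph.fromRel (fun a b : (genericBiCM T).neighborSet v =>
        ¬ (genericBiCM T).Adj ↑a ↑b)).Connected := by
  rintro ⟨⟨i, j⟩, hij⟩
  refine Connected.of_isUniversal (v := ⟨_, genericBiCM_adj_swap hij⟩) fun x hx => ?_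
  exact (fromRel_adj _ _ _).2
    ⟨hx, Or.inr (not_genericBiCM_adj_swap_of_adj hT.isAcyclic hij x.2)⟩
end
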